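/- In the setting of conditioned SGD, let Q ∈ ℝ^{n×k} (k < n) have orthonormal columns, let B ∈ ℝ^{k×k} be symmetric positive definite, let C̃ = Qᵀ C Q where C = (1/m) Σ x_i x_iᵀ, assume tr(C) > tr(C̃), and run the algorithm with conditioner A = Q B Qᵀ + a(I − QQᵀ) where a = √((tr(C) − tr(C̃))/(n−k)), and with learning rate η = σ/(ρ√T) where σ ≥ ‖W*‖_spectral. Then E[L(W̄) − L(W*)] ≤ (σρ/√T) · ( tr(B) + tr(B⁻¹ C̃) + 2√((n−k)(tr(C) − tr(C̃))) ). -/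

import Mathlib

/-!
Conditioned SGD is subgradient descent in the geometry of `A`. In the squared distance
`‖M‖²_A = tr(M A Mᵀ)`, one step from `Wₜ` moves towards `W*` by `2η` times the linearised loss
gap and away from it by at most `η²ρ² xᵀA⁻¹x`. Telescoping, averaging over the uniformly drawn
samples (the `t`-th iterate does not depend on the `t`-th draw) and Jensen's inequality for the
convex risk give `E[L(W̄) − L(W*)] ≤ ‖W*‖²_A/(2ηT) + (ηρ²/2) tr(A⁻¹C)`. Since
`‖W*‖²_A ≤ σ² tr A`, the step `η = σ/(ρ√T)` turns this into `σρ/(2√T) (tr A + tr(A⁻¹C))`.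

For the sketched conditioner `A⁻¹ = Q B⁻¹ Qᵀ + a⁻¹(I − QQᵀ)`, so
`tr A + tr(A⁻¹C) = tr B + tr(B⁻¹C̃) + a(n − k) + a⁻¹(tr C − tr C̃)`, and the chosen `a` makes
the last two terms both equal to `√((n − k)(tr C − tr C̃))`.
-/

open Matrix

lemma sqrt_div_mul_self {c d : ℝ} (hc : 0 < c) (hd : 0 ≤ d) : √(d / c) * c = √(c * d) := by
  rw [← Real.sqrt_sq (by positivity : 0 ≤ √(d / c) * c), mul_pow, Real.sq_sqrt (by positivity)]
  congr 1
  field_simp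

lemma inv_sqrt_div_mul_self {c d : ℝ} (hc : 0 < c) (hd : 0 ≤ d) :
    (√(d / c))⁻¹ * d = √(c * d) := by
  rcases hd.eq_or_lt with rfl | hd
  · simp
  rw [← Real.sqrt_sq (by positivity : 0 ≤ (√(d / c))⁻¹ * d), mul_pow, inv_pow,
    Real.sq_sqrt (by positivity)]
  congr 1
  field_simp

lemma sum_apply_eq_sum_mean {ι α : Type*} [Fintype ι] [DecidableEq ι] [Fintype α] (t : ι)
    (F : (ι → α) → α → ℝ) (hF : ∀ ω a, F (Function.update ω t a) = F ω) :
    ∑ ω, F ω (ω t) = ∑ ω, 1 / (Fintype.card α : ℝ) * ∑ a, F ω a := by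
  let Φ : (ι → α) × α → (ι → α) × α := fun p => (Function.update p.1 t p.2, p.1 t)
  have hΦ : Function.Involutive Φ := fun p => by simp [Φ]
  have hswap : ∑ ω, ∑ a, F ω a = Fintype.card α * ∑ ω, F ω (ω t) := by
    calc ∑ ω, ∑ a, F ω a = ∑ p : (ι → α) × α, F p.1 p.2 := (Fintype.sum_prod_type' F).symm
      _ = ∑ p, F (Φ p).1 (Φ p).2 := (Equiv.sum_comp hΦ.toPerm (fun p => F p.1 p.2)).symm
      _ = ∑ p : (ι → α) × α, F p.1 (p.1 t) := by simp [Φ, hF]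
      _ = Fintype.card α * ∑ ω, F ω (ω t) := by
          rw [Fintype.sum_prod_type]
          simp [Finset.mul_sum]
  rcases (Fintype.card α).eq_zero_or_pos with hα | hα
  · have : IsEmpty α := Fintype.card_eq_zero_iff.mp hα
    have : IsEmpty (ι → α) := ⟨fun ω => isEmptyElim (ω t)⟩
    simp
  · rw [← Finset.mul_sum, hswap, ← mul_assoc, one_div_mul_cancel (by positivity), one_mul]

lemma apply_update_eq_of_recursion {α β : Type*} {T : ℕ} {W : (Fin T → α) → ℕ → β}
    {φ : β → α → β} {W₀ : β} (h0 : ∀ ω, W ω 0 = W₀)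
    (hstep : ∀ ω (t : Fin T), W ω (t + 1) = φ (W ω t) (ω t)) (ω : Fin T → α) (t : Fin T)
    (a : α) : W (Function.update ω t a) t = W ω t := by
  suffices ∀ s ≤ (t : ℕ), W (Function.update ω t a) s = W ω s from this t le_rfl
  intro s hs
  induction s with
  | zero => rw [h0, h0]
  | succ s ih =>
    have hsT : s < T := by omega
    have hne : (⟨s, hsT⟩ : Fin T) ≠ t := Fin.ne_of_val_ne (by simp; omega)
    rw [hstep _ ⟨s, hsT⟩, hstep _ ⟨s, hsT⟩, ih (by omega), Function.update_of_ne hne]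

section WeightedNorm

variable {ι κ : Type*} [Fintype ι] [Fintype κ]

lemma sum_sq_eq_dotProduct_self (v : ι → ℝ) : ∑ i, v i ^ 2 = v ⬝ᵥ v := by
  simp only [dotProduct, sq]

lemma dotProduct_self_nonneg (v : ι → ℝ) : 0 ≤ v ⬝ᵥ v :=
  Fintype.sum_nonneg fun i => mul_self_nonneg (v i)

lemma trace_transpose_mul_self (N : Matrix κ ι ℝ) : (Nᵀ * N).trace = ∑ j, N j ⬝ᵥ N j := by
  simp only [trace, diag, mul_apply, transpose_apply, dotProduct]
  exact Finset.sum_comm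

def normSqWith (A : Matrix ι ι ℝ) (M : Matrix κ ι ℝ) : ℝ := (M * A * Mᵀ).trace

lemma normSqWith_nonneg {A : Matrix ι ι ℝ} (hA : A.PosSemidef) (M : Matrix κ ι ℝ) :
    0 ≤ normSqWith A M := by
  simpa [normSqWith, conjTranspose_eq_transpose_of_trivial] using
    (hA.mul_mul_conjTranspose_same M).trace_nonneg

lemma normSqWith_neg (A : Matrix ι ι ℝ) (M : Matrix κ ι ℝ) :
    normSqWith A (-M) = normSqWith A M := by
  simp [normSqWith]

open scoped MatrixOrder in
lemma normSqWith_le_sq_mul_trace [DecidableEq ι] {A : Matrix ι ι ℝ} (hA : A.PosSemidef)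
    {M : Matrix κ ι ℝ} {σ : ℝ} (hM : ∀ v, √(∑ j, (M *ᵥ v) j ^ 2) ≤ σ * √(∑ i, v i ^ 2)) :
    normSqWith A M ≤ σ ^ 2 * A.trace := by
  obtain ⟨R, rfl⟩ := CStarAlgebra.nonneg_iff_eq_star_mul_self.mp hA.nonneg
  have hsq : ∀ v, M *ᵥ v ⬝ᵥ M *ᵥ v ≤ σ ^ 2 * (v ⬝ᵥ v) := by
    intro v
    have h := pow_le_pow_left₀ (Real.sqrt_nonneg _) (hM v) 2
    rwa [mul_pow, Real.sq_sqrt (by positivity), Real.sq_sqrt (by positivity),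
      sum_sq_eq_dotProduct_self, sum_sq_eq_dotProduct_self] at h
  rw [normSqWith, star_eq_conjTranspose, conjTranspose_eq_transpose_of_trivial]
  calc (M * (Rᵀ * R) * Mᵀ).trace = ((R * Mᵀ)ᵀ * (R * Mᵀ)).trace := by
        simp only [transpose_mul, transpose_transpose, Matrix.mul_assoc]
    _ = ∑ j, M *ᵥ R j ⬝ᵥ M *ᵥ R j := by
        simp only [trace_transpose_mul_self, mul_apply_eq_vecMul, vecMul_transpose]
    _ ≤ ∑ j, σ ^ 2 * (R j ⬝ᵥ R j) := Finset.sum_le_sum fun j _ => hsq (R j)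
    _ = σ ^ 2 * (Rᵀ * R).trace := by rw [← Finset.mul_sum, trace_transpose_mul_self]

lemma normSqWith_sub_smul_vecMulVec [DecidableEq ι] {A : Matrix ι ι ℝ} (hA : A.IsSymm)
    (hdet : IsUnit A.det) (D : Matrix κ ι ℝ) (v : κ → ℝ) (y : ι → ℝ) (η : ℝ) :
    normSqWith A (D - η • vecMulVec v (A⁻¹ *ᵥ y))
      = normSqWith A D - 2 * η * (v ⬝ᵥ D *ᵥ y) + η ^ 2 * (v ⬝ᵥ v) * (y ⬝ᵥ A⁻¹ *ᵥ y) := by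
  set G := vecMulVec v (A⁻¹ *ᵥ y)
  have hGA : G * A = vecMulVec v y := by
    rw [vecMulVec_mul, ← mulVec_transpose, hA.eq, mulVec_mulVec, mul_nonsing_inv _ hdet,
      one_mulVec]
  have hcross : (G * A * Dᵀ).trace = v ⬝ᵥ D *ᵥ y := by
    rw [hGA, vecMulVec_mul, vecMul_transpose, trace_vecMulVec]
  have hcross' : (D * A * Gᵀ).trace = v ⬝ᵥ D *ᵥ y := by
    rw [← trace_transpose, transpose_mul, transpose_mul, transpose_transpose, hA.eq,
      ← Matrix.mul_assoc, hcross]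
  have hquad : (G * A * Gᵀ).trace = (v ⬝ᵥ v) * (y ⬝ᵥ A⁻¹ *ᵥ y) := by
    rw [hGA, transpose_vecMulVec, vecMulVec_mul_vecMulVec, trace_vecMulVec, dotProduct_smul,
      smul_eq_mul, mul_comm]
  simp only [normSqWith, transpose_sub, transpose_smul, Matrix.sub_mul, Matrix.mul_sub,
    Matrix.smul_mul, Matrix.mul_smul, trace_sub, trace_smul, smul_eq_mul, hcross, hcross', hquad]
  ring

end WeightedNorm

section SketchedConditioner

variable {ι κ : Type*} [Fintype ι] [Fintype κ] {Q : Matrix ι κ ℝ}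

def sketchedConditioner [DecidableEq ι] (Q : Matrix ι κ ℝ) (B : Matrix κ κ ℝ) (a : ℝ) :
    Matrix ι ι ℝ :=
  Q * B * Qᵀ + a • (1 - Q * Qᵀ)

lemma trace_sketchedConditioner_mul [DecidableEq ι] (B : Matrix κ κ ℝ) (a : ℝ)
    (C : Matrix ι ι ℝ) :
    (sketchedConditioner Q B a * C).trace
      = (B * (Qᵀ * C * Q)).trace + a * (C.trace - (Qᵀ * C * Q).trace) := by
  have hcycle : (Q * B * Qᵀ * C).trace = (B * (Qᵀ * C * Q)).trace := by
    rw [Matrix.mul_assoc (Q * B), trace_mul_comm, ← Matrix.mul_assoc, trace_mul_comm]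
  rw [sketchedConditioner, Matrix.add_mul, trace_add, Matrix.smul_mul, trace_smul,
    Matrix.sub_mul, trace_sub, Matrix.one_mul, smul_eq_mul, hcycle, trace_mul_cycle Qᵀ C Q]

variable [DecidableEq κ]

lemma trace_mul_mul_transpose_of_orthonormal (hQ : Qᵀ * Q = 1) (M : Matrix κ κ ℝ) :
    (Q * M * Qᵀ).trace = M.trace := by
  rw [trace_mul_cycle, hQ, Matrix.one_mul]

variable [DecidableEq ι]

lemma transpose_mul_one_sub_mul_transpose (hQ : Qᵀ * Q = 1) : Qᵀ * (1 - Q * Qᵀ) = 0 := by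
  rw [Matrix.mul_sub, Matrix.mul_one, ← Matrix.mul_assoc, hQ, Matrix.one_mul, sub_self]

lemma one_sub_mul_transpose_mul_self (hQ : Qᵀ * Q = 1) : (1 - Q * Qᵀ) * Q = 0 := by
  rw [Matrix.sub_mul, Matrix.one_mul, Matrix.mul_assoc, hQ, Matrix.mul_one, sub_self]

lemma one_sub_mul_transpose_idempotent (hQ : Qᵀ * Q = 1) :
    (1 - Q * Qᵀ) * (1 - Q * Qᵀ) = 1 - Q * Qᵀ := by
  rw [Matrix.sub_mul (1 : Matrix ι ι ℝ), Matrix.one_mul, Matrix.mul_assoc,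
    transpose_mul_one_sub_mul_transpose hQ, Matrix.mul_zero, sub_zero]

lemma one_sub_mul_transpose_posSemidef (hQ : Qᵀ * Q = 1) : (1 - Q * Qᵀ).PosSemidef := by
  have hsymm : (1 - Q * Qᵀ)ᴴ = 1 - Q * Qᵀ := by
    rw [conjTranspose_eq_transpose_of_trivial, transpose_sub, transpose_one, transpose_mul,
      transpose_transpose]
  have h := posSemidef_self_mul_conjTranspose (1 - Q * Qᵀ)
  rwa [hsymm, one_sub_mul_transpose_idempotent hQ] at h

lemma trace_one_sub_mul_transpose (hQ : Qᵀ * Q = 1) :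
    (1 - Q * Qᵀ).trace = (Fintype.card ι : ℝ) - Fintype.card κ := by
  rw [trace_sub, trace_one, trace_mul_comm, hQ, trace_one]

lemma trace_sketchedConditioner (hQ : Qᵀ * Q = 1) (B : Matrix κ κ ℝ) (a : ℝ) :
    (sketchedConditioner Q B a).trace = B.trace + a * (Fintype.card ι - Fintype.card κ) := by
  rw [sketchedConditioner, trace_add, trace_smul, trace_mul_mul_transpose_of_orthonormal hQ,
    trace_one_sub_mul_transpose hQ, smul_eq_mul]

lemma sketchedConditioner_posSemidef (hQ : Qᵀ * Q = 1) {B : Matrix κ κ ℝ} (hB : B.PosSemidef)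
    {a : ℝ} (ha : 0 ≤ a) : (sketchedConditioner Q B a).PosSemidef :=
  (hB.mul_mul_conjTranspose_same Q).add ((one_sub_mul_transpose_posSemidef hQ).smul ha)

lemma sketchedConditioner_mul_sketchedConditioner_inv (hQ : Qᵀ * Q = 1) {B : Matrix κ κ ℝ}
    (hB : IsUnit B.det) {a : ℝ} (ha : a ≠ 0) :
    sketchedConditioner Q B a * sketchedConditioner Q B⁻¹ a⁻¹ = 1 := by
  have hQQ : Q * B * Qᵀ * (Q * B⁻¹ * Qᵀ) = Q * Qᵀ := by
    rw [show Q * B * Qᵀ * (Q * B⁻¹ * Qᵀ) = Q * (B * (Qᵀ * Q) * B⁻¹) * Qᵀ by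
      simp only [Matrix.mul_assoc], hQ, Matrix.mul_one, mul_nonsing_inv _ hB, Matrix.mul_one]
  have hQP : Q * B * Qᵀ * (1 - Q * Qᵀ) = 0 := by
    rw [Matrix.mul_assoc, transpose_mul_one_sub_mul_transpose hQ, Matrix.mul_zero]
  have hPQ : (1 - Q * Qᵀ) * (Q * B⁻¹ * Qᵀ) = 0 := by
    rw [← Matrix.mul_assoc, ← Matrix.mul_assoc, one_sub_mul_transpose_mul_self hQ,
      Matrix.zero_mul, Matrix.zero_mul]
  simp only [sketchedConditioner, Matrix.add_mul, Matrix.mul_add, Matrix.smul_mul,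
    Matrix.mul_smul, hQQ, hQP, hPQ, one_sub_mul_transpose_idempotent hQ, smul_zero, add_zero,
    zero_add, inv_smul_smul₀ ha]
  abel

lemma inv_sketchedConditioner (hQ : Qᵀ * Q = 1) {B : Matrix κ κ ℝ} (hB : IsUnit B.det) {a : ℝ}
    (ha : a ≠ 0) : (sketchedConditioner Q B a)⁻¹ = sketchedConditioner Q B⁻¹ a⁻¹ :=
  inv_eq_right_inv (sketchedConditioner_mul_sketchedConditioner_inv hQ hB ha)

lemma trace_sketchedConditioner_add_trace_inv_mul (hQ : Qᵀ * Q = 1) {B : Matrix κ κ ℝ}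
    (hB : IsUnit B.det) {C : Matrix ι ι ℝ} (hC : (Qᵀ * C * Q).trace < C.trace)
    (hκ : Fintype.card κ < Fintype.card ι) {a : ℝ}
    (ha : a = √((C.trace - (Qᵀ * C * Q).trace) / (Fintype.card ι - Fintype.card κ))) :
    (sketchedConditioner Q B a).trace + ((sketchedConditioner Q B a)⁻¹ * C).trace
      = B.trace + (B⁻¹ * (Qᵀ * C * Q)).trace
        + 2 * √((Fintype.card ι - Fintype.card κ) * (C.trace - (Qᵀ * C * Q).trace)) := by
  have hd : 0 < C.trace - (Qᵀ * C * Q).trace := sub_pos.2 hC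
  have hc : (0 : ℝ) < Fintype.card ι - Fintype.card κ := sub_pos.2 (by exact_mod_cast hκ)
  have ha0 : a ≠ 0 := ha ▸ (Real.sqrt_pos.2 (div_pos hd hc)).ne'
  rw [trace_sketchedConditioner hQ, inv_sketchedConditioner hQ hB ha0,
    trace_sketchedConditioner_mul, ha, sqrt_div_mul_self hc hd.le, inv_sqrt_div_mul_self hc hd.le]
  ring

end SketchedConditioner

section EmpiricalRisk

variable {ι κ I : Type*} [Fintype ι] [Fintype I]

noncomputable def empiricalRisk (ℓ : I → (κ → ℝ) → ℝ) (x : I → ι → ℝ) (W : Matrix κ ι ℝ) : ℝ :=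
  1 / (Fintype.card I : ℝ) * ∑ i, ℓ i (W *ᵥ x i)

noncomputable def dataCorrelation (x : I → ι → ℝ) : Matrix ι ι ℝ :=
  (1 / (Fintype.card I : ℝ)) • ∑ i, vecMulVec (x i) (x i)

lemma trace_mul_dataCorrelation (M : Matrix ι ι ℝ) (x : I → ι → ℝ) :
    (M * dataCorrelation x).trace = 1 / (Fintype.card I : ℝ) * ∑ i, x i ⬝ᵥ M *ᵥ x i := by
  simp only [dataCorrelation, Matrix.mul_smul, trace_smul, Matrix.mul_sum, trace_sum,
    mul_vecMulVec, trace_vecMulVec, smul_eq_mul, dotProduct_comm]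

lemma trace_mul_dataCorrelation_nonneg {M : Matrix ι ι ℝ} (hM : M.PosSemidef)
    (x : I → ι → ℝ) : 0 ≤ (M * dataCorrelation x).trace := by
  rw [trace_mul_dataCorrelation]
  exact mul_nonneg (by positivity) (Finset.sum_nonneg fun i _ => by
    simpa using hM.dotProduct_mulVec_nonneg (x i))

lemma convexOn_empiricalRisk {ℓ : I → (κ → ℝ) → ℝ} (hconv : ∀ i, ConvexOn ℝ Set.univ (ℓ i))
    (x : I → ι → ℝ) : ConvexOn ℝ Set.univ (empiricalRisk ℓ x) := by
  refine ⟨convex_univ, fun W _ V _ a b ha hb hab => ?_⟩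
  have hi : ∀ i, ℓ i ((a • W + b • V) *ᵥ x i) ≤ a * ℓ i (W *ᵥ x i) + b * ℓ i (V *ᵥ x i) := by
    intro i
    rw [add_mulVec, smul_mulVec, smul_mulVec]
    exact (hconv i).2 trivial trivial ha hb hab
  calc empiricalRisk ℓ x (a • W + b • V)
      ≤ 1 / (Fintype.card I : ℝ) * ∑ i, (a * ℓ i (W *ᵥ x i) + b * ℓ i (V *ᵥ x i)) := by
        unfold empiricalRisk
        gcongr with i
        exact hi i
    _ = a • empiricalRisk ℓ x W + b • empiricalRisk ℓ x V := by
        simp only [empiricalRisk, Finset.sum_add_distrib, ← Finset.mul_sum, smul_eq_mul]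
        ring

lemma empiricalRisk_average_sub_le {ℓ : I → (κ → ℝ) → ℝ}
    (hconv : ∀ i, ConvexOn ℝ Set.univ (ℓ i)) (x : I → ι → ℝ) {T : ℕ} (hT : 0 < T)
    (w : Fin T → Matrix κ ι ℝ) (W' : Matrix κ ι ℝ) :
    empiricalRisk ℓ x ((T : ℝ)⁻¹ • ∑ t, w t) - empiricalRisk ℓ x W'
      ≤ (T : ℝ)⁻¹ * ∑ t, (empiricalRisk ℓ x (w t) - empiricalRisk ℓ x W') := by
  have h := (convexOn_empiricalRisk hconv x).map_sum_le (t := Finset.univ)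
    (w := fun _ => (T : ℝ)⁻¹) (p := w) (fun _ _ => by positivity) (by simp [hT.ne'])
    (fun _ _ => trivial)
  rw [Finset.sum_sub_distrib, Finset.sum_const, Finset.card_univ, Fintype.card_fin, nsmul_eq_mul,
    mul_sub, ← mul_assoc, inv_mul_cancel₀ (by positivity), one_mul, Finset.mul_sum]
  simpa only [← Finset.smul_sum, smul_eq_mul, sub_le_sub_iff_right] using h

lemma sum_empiricalRisk_eq_sum_loss_sample (ℓ : I → (κ → ℝ) → ℝ)
    (x : I → ι → ℝ) {T : ℕ} (t : Fin T) {V : (Fin T → I) → Matrix κ ι ℝ}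
    (hV : ∀ ω a, V (Function.update ω t a) = V ω) :
    ∑ ω, empiricalRisk ℓ x (V ω) = ∑ ω, ℓ (ω t) (V ω *ᵥ x (ω t)) :=
  (sum_apply_eq_sum_mean t (fun ω i => ℓ i (V ω *ᵥ x i)) fun ω a => by simp only [hV]).symm

lemma sum_sample_dotProduct_mulVec_eq (M : Matrix ι ι ℝ) (x : I → ι → ℝ) {T : ℕ} (t : Fin T) :
    ∑ ω : Fin T → I, x (ω t) ⬝ᵥ M *ᵥ x (ω t)
      = Fintype.card I ^ T * (M * dataCorrelation x).trace := by
  rw [sum_apply_eq_sum_mean t (fun _ i => x i ⬝ᵥ M *ᵥ x i) fun _ _ => rfl,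
    trace_mul_dataCorrelation]
  simp

end EmpiricalRisk

lemma dotProduct_self_le_sq_of_subgradient {κ : Type*} [Fintype κ] {f : (κ → ℝ) → ℝ} {ρ : ℝ}
    (hf : ∀ u v, |f u - f v| ≤ ρ * √(∑ j, (u j - v j) ^ 2)) {w v : κ → ℝ}
    (hv : ∀ u, f w + ∑ j, v j * (u j - w j) ≤ f u) : v ⬝ᵥ v ≤ ρ ^ 2 := by
  have hgrow := hv (w + v)
  have hlip := (abs_le.1 (hf (w + v) w)).2
  simp only [Pi.add_apply, add_sub_cancel_left, sum_sq_eq_dotProduct_self] at hgrow hlip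
  change f w + v ⬝ᵥ v ≤ f (w + v) at hgrow
  have hr := Real.sq_sqrt (dotProduct_self_nonneg v)
  nlinarith [Real.sqrt_nonneg (v ⬝ᵥ v), sq_nonneg (ρ - √(v ⬝ᵥ v))]

section ConditionedSGD

variable {ι κ I : Type*} [Fintype ι] [DecidableEq ι] [Fintype κ]

lemma two_mul_sub_le_of_conditioned_step {A : Matrix ι ι ℝ} (hA : A.PosSemidef)
    (hdet : IsUnit A.det) {f : (κ → ℝ) → ℝ} {ρ : ℝ}
    (hf : ∀ u v, |f u - f v| ≤ ρ * √(∑ j, (u j - v j) ^ 2)) {M : Matrix κ ι ℝ} {y : ι → ℝ}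
    {v : κ → ℝ} (hv : ∀ u, f (M *ᵥ y) + ∑ j, v j * (u j - (M *ᵥ y) j) ≤ f u) {η : ℝ}
    (hη : 0 ≤ η) (Wstar : Matrix κ ι ℝ) :
    2 * η * (f (M *ᵥ y) - f (Wstar *ᵥ y))
      ≤ normSqWith A (M - Wstar) - normSqWith A (M - η • vecMulVec v (A⁻¹ *ᵥ y) - Wstar)
        + η ^ 2 * ρ ^ 2 * (y ⬝ᵥ A⁻¹ *ᵥ y) := by
  have hsub : f (M *ᵥ y) - f (Wstar *ᵥ y) ≤ v ⬝ᵥ (M - Wstar) *ᵥ y := by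
    have h := hv (Wstar *ᵥ y)
    simp only [sub_mulVec, dotProduct, Pi.sub_apply, mul_sub, Finset.sum_sub_distrib] at h ⊢
    linarith
  have hv2 : v ⬝ᵥ v ≤ ρ ^ 2 := dotProduct_self_le_sq_of_subgradient hf hv
  have hq : 0 ≤ y ⬝ᵥ A⁻¹ *ᵥ y := by simpa using hA.inv.dotProduct_mulVec_nonneg y
  have hsymm : A.IsSymm := by
    simpa [IsSymm, conjTranspose_eq_transpose_of_trivial] using hA.isHermitian
  rw [sub_right_comm, normSqWith_sub_smul_vecMulVec hsymm hdet]
  have h1 := mul_le_mul_of_nonneg_left hsub (by positivity : (0 : ℝ) ≤ 2 * η)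
  have h2 := mul_le_mul_of_nonneg_right hv2 (mul_nonneg (sq_nonneg η) hq)
  nlinarith

lemma sum_loss_sub_le_of_conditioned_steps (x : I → ι → ℝ)
    (ℓ : I → (κ → ℝ) → ℝ) (g : Matrix κ ι ℝ → I → κ → ℝ) {ρ : ℝ}
    (hlip : ∀ i u v, |ℓ i u - ℓ i v| ≤ ρ * √(∑ j, (u j - v j) ^ 2))
    (hg : ∀ M i u, ℓ i (M *ᵥ x i) + ∑ j, g M i j * (u j - (M *ᵥ x i) j) ≤ ℓ i u)
    {A : Matrix ι ι ℝ} (hA : A.PosSemidef) (hdet : IsUnit A.det) {η : ℝ} (hη : 0 < η)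
    (Wstar : Matrix κ ι ℝ) {T : ℕ} (s : Fin T → I) (w : ℕ → Matrix κ ι ℝ)
    (hw : ∀ t : Fin T, w (t + 1) = w t - η • vecMulVec (g (w t) (s t)) (A⁻¹ *ᵥ x (s t))) :
    ∑ t : Fin T, (ℓ (s t) (w t *ᵥ x (s t)) - ℓ (s t) (Wstar *ᵥ x (s t)))
      ≤ normSqWith A (w 0 - Wstar) / (2 * η)
        + η / 2 * ρ ^ 2 * ∑ t : Fin T, x (s t) ⬝ᵥ A⁻¹ *ᵥ x (s t) := by
  set S := fun t => normSqWith A (w t - Wstar)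
  have hstep : ∀ t : Fin T, 2 * η * (ℓ (s t) (w t *ᵥ x (s t)) - ℓ (s t) (Wstar *ᵥ x (s t)))
      ≤ S t - S (t + 1) + η ^ 2 * ρ ^ 2 * (x (s t) ⬝ᵥ A⁻¹ *ᵥ x (s t)) := fun t => by
    simp only [S, hw t]
    exact two_mul_sub_le_of_conditioned_step hA hdet (hlip (s t)) (hg (w t) (s t)) hη.le Wstar
  have htelescope : ∑ t : Fin T, (S t - S (t + 1)) = S 0 - S T := by
    rw [Fin.sum_univ_eq_sum_range (fun t => S t - S (t + 1))]
    exact Finset.sum_range_sub' S T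
  have hsum := Finset.sum_le_sum fun t (_ : t ∈ Finset.univ) => hstep t
  rw [← Finset.mul_sum, Finset.sum_add_distrib, htelescope, ← Finset.mul_sum] at hsum
  have hST : 0 ≤ S T := normSqWith_nonneg hA _
  rw [div_add' _ _ _ (by positivity), le_div_iff₀ (by positivity)]
  nlinarith

theorem conditionedSGD_sum_excess_risk_le [Fintype I]
    (x : I → ι → ℝ) (ℓ : I → (κ → ℝ) → ℝ) (g : Matrix κ ι ℝ → I → κ → ℝ)
    (hconv : ∀ i, ConvexOn ℝ Set.univ (ℓ i)) {ρ : ℝ}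
    (hlip : ∀ i u v, |ℓ i u - ℓ i v| ≤ ρ * √(∑ j, (u j - v j) ^ 2))
    (hg : ∀ M i u, ℓ i (M *ᵥ x i) + ∑ j, g M i j * (u j - (M *ᵥ x i) j) ≤ ℓ i u)
    {A : Matrix ι ι ℝ} (hA : A.PosSemidef) (hdet : IsUnit A.det) {T : ℕ} (hT : 0 < T)
    {η : ℝ} (hη : 0 < η) (Wstar W₀ : Matrix κ ι ℝ) (W : (Fin T → I) → ℕ → Matrix κ ι ℝ)
    (hW0 : ∀ ω, W ω 0 = W₀)
    (hWt : ∀ ω (t : Fin T),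
      W ω (t + 1) = W ω t - η • vecMulVec (g (W ω t) (ω t)) (A⁻¹ *ᵥ x (ω t))) :
    ∑ ω, (empiricalRisk ℓ x ((T : ℝ)⁻¹ • ∑ t : Fin T, W ω t) - empiricalRisk ℓ x Wstar)
      ≤ Fintype.card I ^ T * (normSqWith A (W₀ - Wstar) / (2 * η * T)
        + η / 2 * ρ ^ 2 * (A⁻¹ * dataCorrelation x).trace) := by
  set R := empiricalRisk ℓ x
  set q := fun i => x i ⬝ᵥ A⁻¹ *ᵥ x i
  have hindep : ∀ ω (t : Fin T) a, W (Function.update ω t a) t = W ω t :=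
    apply_update_eq_of_recursion (φ := fun M i => M - η • vecMulVec (g M i) (A⁻¹ *ᵥ x i)) hW0 hWt
  have hrisk : ∀ t : Fin T, ∑ ω, (R (W ω t) - R Wstar)
      = ∑ ω, (ℓ (ω t) (W ω t *ᵥ x (ω t)) - ℓ (ω t) (Wstar *ᵥ x (ω t))) := fun t => by
    rw [Finset.sum_sub_distrib, Finset.sum_sub_distrib,
      sum_empiricalRisk_eq_sum_loss_sample ℓ x t (hindep · t),
      sum_empiricalRisk_eq_sum_loss_sample ℓ x t (V := fun _ => Wstar) fun _ _ => rfl]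
  have hpath : ∀ ω, ∑ t : Fin T, (ℓ (ω t) (W ω t *ᵥ x (ω t)) - ℓ (ω t) (Wstar *ᵥ x (ω t)))
      ≤ normSqWith A (W₀ - Wstar) / (2 * η) + η / 2 * ρ ^ 2 * ∑ t : Fin T, q (ω t) := fun ω => by
    simpa only [hW0] using
      sum_loss_sub_le_of_conditioned_steps x ℓ g hlip hg hA hdet hη Wstar ω (W ω) (hWt ω)
  calc ∑ ω, (R ((T : ℝ)⁻¹ • ∑ t : Fin T, W ω t) - R Wstar)
      ≤ ∑ ω, (T : ℝ)⁻¹ * ∑ t : Fin T, (R (W ω t) - R Wstar) :=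
        Finset.sum_le_sum fun ω _ => empiricalRisk_average_sub_le hconv x hT _ Wstar
    _ = (T : ℝ)⁻¹ * ∑ ω, ∑ t : Fin T,
          (ℓ (ω t) (W ω t *ᵥ x (ω t)) - ℓ (ω t) (Wstar *ᵥ x (ω t))) := by
        rw [← Finset.mul_sum, Finset.sum_comm, Finset.sum_congr rfl fun t _ => hrisk t,
          Finset.sum_comm]
    _ ≤ (T : ℝ)⁻¹ * ∑ ω : Fin T → I,
          (normSqWith A (W₀ - Wstar) / (2 * η) + η / 2 * ρ ^ 2 * ∑ t : Fin T, q (ω t)) := by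
        gcongr with ω
        exact hpath ω
    _ = Fintype.card I ^ T * (normSqWith A (W₀ - Wstar) / (2 * η * T)
          + η / 2 * ρ ^ 2 * (A⁻¹ * dataCorrelation x).trace) := by
        rw [Finset.sum_add_distrib, ← Finset.mul_sum, Finset.sum_comm,
          Finset.sum_congr rfl fun t _ => sum_sample_dotProduct_mulVec_eq A⁻¹ x t]
        simp only [Finset.sum_const, Finset.card_univ, Fintype.card_fin, Fintype.card_fun,
          nsmul_eq_mul]
        field_simp
        push_cast
        ring

theorem conditionedSGD_sum_excess_risk_le_of_stepSize [Fintype I] (x : I → ι → ℝ)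
    (ℓ : I → (κ → ℝ) → ℝ) (g : Matrix κ ι ℝ → I → κ → ℝ)
    (hconv : ∀ i, ConvexOn ℝ Set.univ (ℓ i)) {ρ : ℝ} (hρ : 0 < ρ)
    (hlip : ∀ i u v, |ℓ i u - ℓ i v| ≤ ρ * √(∑ j, (u j - v j) ^ 2))
    (hg : ∀ M i u, ℓ i (M *ᵥ x i) + ∑ j, g M i j * (u j - (M *ᵥ x i) j) ≤ ℓ i u)
    {A : Matrix ι ι ℝ} (hA : A.PosSemidef) (hdet : IsUnit A.det) {Wstar : Matrix κ ι ℝ}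
    {σ : ℝ} (hσ0 : 0 ≤ σ) (hσ : ∀ v, √(∑ j, (Wstar *ᵥ v) j ^ 2) ≤ σ * √(∑ i, v i ^ 2))
    {T : ℕ} (hT : 0 < T) {η : ℝ} (hη : η = σ / (ρ * √T)) (W : (Fin T → I) → ℕ → Matrix κ ι ℝ)
    (hW0 : ∀ ω, W ω 0 = 0)
    (hWt : ∀ ω (t : Fin T),
      W ω (t + 1) = W ω t - η • vecMulVec (g (W ω t) (ω t)) (A⁻¹ *ᵥ x (ω t))) :
    ∑ ω, (empiricalRisk ℓ x ((T : ℝ)⁻¹ • ∑ t : Fin T, W ω t) - empiricalRisk ℓ x Wstar)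
      ≤ Fintype.card I ^ T
        * (σ * ρ / (2 * √T) * (A.trace + (A⁻¹ * dataCorrelation x).trace)) := by
  rcases hσ0.eq_or_lt with rfl | hσpos
  -- For `σ = 0` the step size vanishes, but so does `W*`: the iterates never leave it.
  · have hWstar : Wstar = 0 := by
      refine ext_iff_mulVec.2 fun v => ?_
      have h := Real.sqrt_eq_zero'.1 (le_antisymm ((hσ v).trans_eq (zero_mul _))
        (Real.sqrt_nonneg _))
      rw [sum_sq_eq_dotProduct_self] at h
      rw [zero_mulVec, ← dotProduct_self_eq_zero]
      exact le_antisymm h (dotProduct_self_nonneg _)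
    have hstay : ∀ ω (t : ℕ), t ≤ T → W ω t = 0 := by
      intro ω t ht
      induction t with
      | zero => exact hW0 ω
      | succ t ih => rw [hWt ω ⟨t, ht⟩, ih (by omega), hη, zero_div, zero_smul, sub_zero]
    simp [hWstar, hstay, Fin.is_le']
  have hηpos : 0 < η := by rw [hη]; positivity
  have hnorm : normSqWith A (0 - Wstar) ≤ σ ^ 2 * A.trace := by
    rw [zero_sub, normSqWith_neg]
    exact normSqWith_le_sq_mul_trace hA hσ
  have hTsq : √(T : ℝ) ^ 2 = T := Real.sq_sqrt (Nat.cast_nonneg T)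
  calc _ ≤ _ := conditionedSGD_sum_excess_risk_le x ℓ g hconv hlip hg hA hdet hT hηpos Wstar 0 W
        hW0 hWt
    _ ≤ Fintype.card I ^ T * (σ ^ 2 * A.trace / (2 * η * T)
          + η / 2 * ρ ^ 2 * (A⁻¹ * dataCorrelation x).trace) := by
        gcongr
    _ = _ := by
        rw [hη]
        field_simp
        rw [hTsq]
        ring

end ConditionedSGD

theorem stmt11_general {n p m k : ℕ} (hk : k < n)
    (x : Fin m → Fin n → ℝ) (ρ : ℝ) (hρ : 0 < ρ)
    (ℓ : Fin m → (Fin p → ℝ) → ℝ)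
    (hconv : ∀ i, ConvexOn ℝ Set.univ (ℓ i))
    (hlip : ∀ i, ∀ u v : Fin p → ℝ,
      |ℓ i u - ℓ i v| ≤ ρ * Real.sqrt (∑ j, (u j - v j) ^ 2))
    (L : Matrix (Fin p) (Fin n) ℝ → ℝ)
    (hL : ∀ W, L W = (1 / (m : ℝ)) * ∑ i, ℓ i (W *ᵥ x i))
    (Wstar : Matrix (Fin p) (Fin n) ℝ)
    (σ : ℝ)
    (hσ : ∀ v : Fin n → ℝ,
      Real.sqrt (∑ j, ((Wstar *ᵥ v) j) ^ 2) ≤ σ * Real.sqrt (∑ i, (v i) ^ 2))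
    (C : Matrix (Fin n) (Fin n) ℝ)
    (hC : C = (1 / (m : ℝ)) • ∑ i, Matrix.vecMulVec (x i) (x i))
    (Q : Matrix (Fin n) (Fin k) ℝ) (hQ : Qᵀ * Q = 1)
    (B : Matrix (Fin k) (Fin k) ℝ) (hB : B.PosDef)
    (Ct : Matrix (Fin k) (Fin k) ℝ) (hCt : Ct = Qᵀ * C * Q)
    (htr : Ct.trace < C.trace)
    (a : ℝ) (ha : a = Real.sqrt ((C.trace - Ct.trace) / ((n : ℝ) - (k : ℝ))))
    (A : Matrix (Fin n) (Fin n) ℝ)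
    (hA : A = Q * B * Qᵀ + a • (1 - Q * Qᵀ))
    (T : ℕ) (hT : 0 < T)
    (η : ℝ) (hη : η = σ / (ρ * Real.sqrt T))
    (g : Matrix (Fin p) (Fin n) ℝ → Fin m → (Fin p → ℝ))
    (hg : ∀ W i, ∀ u : Fin p → ℝ,
      ℓ i (W *ᵥ x i) + ∑ j, g W i j * (u j - (W *ᵥ x i) j) ≤ ℓ i u)
    (W : (Fin T → Fin m) → ℕ → Matrix (Fin p) (Fin n) ℝ)
    (hW0 : ∀ ω, W ω 0 = 0)
    (hWt : ∀ ω (t : Fin T),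
      W ω ((t : ℕ) + 1)
        = W ω (t : ℕ)
          - η • Matrix.vecMulVec (g (W ω (t : ℕ)) (ω t)) (A⁻¹ *ᵥ x (ω t))) :
    (∑ ω : Fin T → Fin m,
        (L ((T : ℝ)⁻¹ • ∑ t : Fin T, W ω (t : ℕ)) - L Wstar)) / (m : ℝ) ^ T
      ≤ (σ * ρ / Real.sqrt T)
          * (B.trace + (B⁻¹ * Ct).trace
              + 2 * Real.sqrt (((n : ℝ) - (k : ℝ)) * (C.trace - Ct.trace))) := by
  obtain rfl : L = empiricalRisk ℓ x := funext fun W => by simp [hL, empiricalRisk]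
  obtain rfl : C = dataCorrelation x := by simp [hC, dataCorrelation]
  obtain rfl : A = sketchedConditioner Q B a := hA
  subst hCt
  have hσ0 : 0 ≤ σ := nonneg_of_mul_nonneg_left ((Real.sqrt_nonneg _).trans (hσ fun _ => 1))
    (Real.sqrt_pos.2 (by simp; omega))
  have hapos : 0 < a := ha ▸ Real.sqrt_pos.2 (div_pos (sub_pos.2 htr) (by simpa using hk))
  have hBdet : IsUnit B.det := (isUnit_iff_isUnit_det B).mp hB.isUnit
  have hApsd := sketchedConditioner_posSemidef hQ hB.posSemidef hapos.le
  have hbound := conditionedSGD_sum_excess_risk_le_of_stepSize x ℓ g hconv hρ hlip hg hApsd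
    (isUnit_det_of_right_inverse
      (sketchedConditioner_mul_sketchedConditioner_inv hQ hBdet hapos.ne'))
    hσ0 hσ hT hη W hW0 hWt
  have htrace := trace_sketchedConditioner_add_trace_inv_mul hQ hBdet htr (by simpa using hk)
    (by simpa using ha)
  have hX := add_nonneg hApsd.trace_nonneg (trace_mul_dataCorrelation_nonneg hApsd.inv x)
  simp only [htrace, Fintype.card_fin] at hbound hX
  refine div_le_of_le_mul₀ (by positivity) (mul_nonneg (by positivity) hX) ?_
  refine hbound.trans ?_
  rw [mul_comm]
  gcongr
  linarith [Real.sqrt_nonneg (T : ℝ)]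

/-- Theorem 2 of the paper. Conditioned SGD with the sketched
conditioner `A = Q B Qᵀ + a (I − Q Qᵀ)`, where `QᵀQ = I`, `B` is symmetric
positive definite, `C̃ = Qᵀ C Q`, `tr(C) > tr(C̃)`,
`a = √((tr(C) − tr(C̃))/(n−k))`, and learning rate `η = σ/(ρ√T)` with
`σ ≥ ‖W*‖_spectral`, satisfies
`E[L(W̄) − L(W*)] ≤ (σρ/√T) (tr(B) + tr(B⁻¹ C̃) + 2√((n−k)(tr(C) − tr(C̃))))`. -/
theorem stmt11 {n p m k : ℕ} (hm : 0 < m) (hk : k < n)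
    (x : Fin m → Fin n → ℝ) (ρ : ℝ) (hρ : 0 < ρ)
    (ℓ : Fin m → (Fin p → ℝ) → ℝ)
    (hconv : ∀ i, ConvexOn ℝ Set.univ (ℓ i))
    (hlip : ∀ i, ∀ u v : Fin p → ℝ,
      |ℓ i u - ℓ i v| ≤ ρ * Real.sqrt (∑ j, (u j - v j) ^ 2))
    (L : Matrix (Fin p) (Fin n) ℝ → ℝ)
    (hL : ∀ W, L W = (1 / (m : ℝ)) * ∑ i, ℓ i (W *ᵥ x i))
    (Wstar : Matrix (Fin p) (Fin n) ℝ)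
    (hWstar : ∀ W, L Wstar ≤ L W)
    (σ : ℝ)
    (hσ : ∀ v : Fin n → ℝ,
      Real.sqrt (∑ j, ((Wstar *ᵥ v) j) ^ 2) ≤ σ * Real.sqrt (∑ i, (v i) ^ 2))
    (C : Matrix (Fin n) (Fin n) ℝ)
    (hC : C = (1 / (m : ℝ)) • ∑ i, Matrix.vecMulVec (x i) (x i))
    (Q : Matrix (Fin n) (Fin k) ℝ) (hQ : Qᵀ * Q = 1)
    (B : Matrix (Fin k) (Fin k) ℝ) (hB : B.PosDef)
    (Ct : Matrix (Fin k) (Fin k) ℝ) (hCt : Ct = Qᵀ * C * Q)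
    (htr : Ct.trace < C.trace)
    (a : ℝ) (ha : a = Real.sqrt ((C.trace - Ct.trace) / ((n : ℝ) - (k : ℝ))))
    (A : Matrix (Fin n) (Fin n) ℝ)
    (hA : A = Q * B * Qᵀ + a • (1 - Q * Qᵀ))
    (T : ℕ) (hT : 0 < T)
    (η : ℝ) (hη : η = σ / (ρ * Real.sqrt T))
    (g : Matrix (Fin p) (Fin n) ℝ → Fin m → (Fin p → ℝ))
    (hg : ∀ W i, ∀ u : Fin p → ℝ,
      ℓ i (W *ᵥ x i) + ∑ j, g W i j * (u j - (W *ᵥ x i) j) ≤ ℓ i u)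
    (W : (Fin T → Fin m) → ℕ → Matrix (Fin p) (Fin n) ℝ)
    (hW0 : ∀ ω, W ω 0 = 0)
    (hWt : ∀ ω (t : Fin T),
      W ω ((t : ℕ) + 1)
        = W ω (t : ℕ)
          - η • Matrix.vecMulVec (g (W ω (t : ℕ)) (ω t)) (A⁻¹ *ᵥ x (ω t))) :
    (∑ ω : Fin T → Fin m,
        (L ((T : ℝ)⁻¹ • ∑ t : Fin T, W ω (t : ℕ)) - L Wstar)) / (m : ℝ) ^ T
      ≤ (σ * ρ / Real.sqrt T)
          * (B.trace + (B⁻¹ * Ct).trace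
              + 2 * Real.sqrt (((n : ℝ) - (k : ℝ)) * (C.trace - Ct.trace))) :=
  stmt11_general hk x ρ hρ ℓ hconv hlip L hL Wstar σ hσ C hC Q hQ B hB Ct hCt htr a ha A hA T hT η
    hη g hg W hW0 hWt
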